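/- Every isometry A ∈ Isom(L_z) with A(Fix κ₁) = Fix(κ₁) satisfies A(u₁) = ε₁·u₁ and A(u₂) = ε₂·u₂ for some signs ε₁, ε₂ ∈ {1, −1}; conversely, for each of the four sign choices (ε₁, ε₂) ∈ {1, −1}² there exists A ∈ Isom(L_z) with A(Fix κ₁) = Fix(κ₁), A(u₁) = ε₁·u₁, and A(u₂) = ε₂·u₂. Hence the setwise stabilizer of Fix(κ₁) in Isom(L_z) acts on Fix(κ₁) through a group isomorphic to ℤ/2 × ℤ/2. -/

import Mathlib

/-- The imaginary unit `i` in the Gaussian integers `ℤ[i]`. -/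
def gi : GaussianInt := Zsqrtd.sqrtd

/-- The underlying `ℤ[i]`-module of the Gaussian lattice `L_z`. -/
abbrev Lz : Type := GaussianInt × GaussianInt

/-- The Hermitian form of `L_z`, given by the matrix `[[-2, 1-i], [1+i, -2]]`;
conjugate-linear in the first argument, linear in the second. -/
def hz (x y : Lz) : GaussianInt :=
  star x.1 * (-2) * y.1 + star x.1 * (1 - gi) * y.2 +
    star x.2 * (1 + gi) * y.1 + star x.2 * (-2) * y.2

/-- An isometry of `L_z`: a `ℤ[i]`-linear bijection preserving the form `hz`. -/
def IsIsomLz (A : Lz → Lz) : Prop :=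
  Function.Bijective A ∧ (∀ x y : Lz, A (x + y) = A x + A y) ∧
    (∀ (c : GaussianInt) (x : Lz), A (c • x) = c • A x) ∧
    ∀ x y : Lz, hz (A x) (A y) = hz x y

/-- An involutive anti-isometry of `L_z`: an additive bijection `ν` with
`ν (c • v) = c̄ • ν v`, `hz (ν x) (ν y) = conj (hz x y)` and `ν ∘ ν = id`. -/
def IsInvAntiIsomLz (ν : Lz → Lz) : Prop :=
  Function.Bijective ν ∧ (∀ x y : Lz, ν (x + y) = ν x + ν y) ∧
    (∀ (c : GaussianInt) (x : Lz), ν (c • x) = star c • ν x) ∧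
    (∀ x y : Lz, hz (ν x) (ν y) = star (hz x y)) ∧
    ∀ x : Lz, ν (ν x) = x

/-- The anti-isometry `κ₁ : (x₁, x₂) ↦ (−x̄₂, −x̄₁)` of `L_z`. -/
def kappa1 (x : Lz) : Lz := (-(star x.2), -(star x.1))

/-- The anti-isometry `κ₃ : (x₁, x₂) ↦ (i·x̄₁, −x̄₂)` of `L_z`. -/
def kappa3 (x : Lz) : Lz := (gi * star x.1, -(star x.2))

/-!
`Fix(κ₁) = {(a, -ā)}` has the `ℤ`-basis `u₁, u₂`, which is orthogonal for `h`:
`h(m u₁ + n u₂, m u₁ + n u₂) = -2 (2m² + n²)`. So the only vectors of norm `-4` in `Fix(κ₁)` are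
`±u₁` and the only ones of norm `-2` are `±u₂`, and an isometry stabilising `Fix(κ₁)` must send
`u₁ ↦ ±u₁`, `u₂ ↦ ±u₂`. Conversely `±id` and `±` the reflection in `u₁` commute with `κ₁` and
realise the four sign patterns.
-/
lemma abs_le_one_of_two_mul_sq_add_sq_le_two {m n : ℤ} (h : 2 * m ^ 2 + n ^ 2 ≤ 2) :
    |m| ≤ 1 ∧ |n| ≤ 1 := by
  have hm : m ^ 2 < 2 ^ 2 := by nlinarith [sq_nonneg n]
  have hn : n ^ 2 < 2 ^ 2 := by nlinarith [sq_nonneg m]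
  exact ⟨Int.lt_add_one_iff.mp (abs_lt_of_sq_lt_sq hm zero_le_two),
    Int.lt_add_one_iff.mp (abs_lt_of_sq_lt_sq hn zero_le_two)⟩

lemma eq_of_two_mul_sq_add_sq_eq_two {m n : ℤ} (h : 2 * m ^ 2 + n ^ 2 = 2) :
    (m = 1 ∨ m = -1) ∧ n = 0 := by
  obtain ⟨hm, hn⟩ := abs_le_one_of_two_mul_sq_add_sq_le_two h.le
  obtain ⟨hm₁, hm₂⟩ := abs_le.mp hm
  obtain ⟨hn₁, hn₂⟩ := abs_le.mp hn
  interval_cases m <;> interval_cases n <;> simp_all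

lemma eq_of_two_mul_sq_add_sq_eq_one {m n : ℤ} (h : 2 * m ^ 2 + n ^ 2 = 1) :
    m = 0 ∧ (n = 1 ∨ n = -1) := by
  obtain ⟨hm, hn⟩ := abs_le_one_of_two_mul_sq_add_sq_le_two (by rw [h]; norm_num)
  obtain ⟨hm₁, hm₂⟩ := abs_le.mp hm
  obtain ⟨hn₁, hn₂⟩ := abs_le.mp hn
  interval_cases m <;> interval_cases n <;> simp_all

lemma exists_sign_smul_of_eq_or_eq_neg {R M : Type*} [Ring R] [AddCommGroup M] [Module R M]
    {u v : M} (h : v = u ∨ v = -u) : ∃ ε ∈ ({1, -1} : Set R), v = ε • u := by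
  rcases h with rfl | rfl
  · exact ⟨1, by simp, (one_smul R v).symm⟩
  · exact ⟨-1, by simp, (neg_one_smul R u).symm⟩

lemma Function.Commute.image_fixedPoints_of_bijective {α : Type*} {f g : α → α}
    (h : Function.Commute f g) (hg : g.Bijective) : g '' fixedPoints f = fixedPoints f := by
  refine (h.symm.mapsTo_fixedPoints.image_subset).antisymm fun v hv => ?_
  obtain ⟨w, rfl⟩ := hg.2 v
  exact ⟨w, hg.1 ((h w).symm.trans hv), rfl⟩

namespace Lz

def u₁ : Lz := (-1 - gi, 1 - gi)
def u₂ : Lz := (gi, gi)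

lemma hz_neg_neg (x y : Lz) : hz (-x) (-y) = hz x y := by
  simp only [hz, Prod.fst_neg, Prod.snd_neg, star_neg]
  ring

lemma kappa1_neg (x : Lz) : kappa1 (-x) = -kappa1 x := by
  simp [kappa1]

lemma kappa1_eq_self_iff {v : Lz} : kappa1 v = v ↔ v.2 = -star v.1 := by
  obtain ⟨a, b⟩ := v
  simp only [kappa1, Prod.mk.injEq]
  constructor
  · rintro ⟨-, h⟩; exact h.symm
  · rintro rfl; simp

lemma exists_eq_zsmul_add_zsmul_of_kappa1_eq_self {v : Lz} (hv : kappa1 v = v) :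
    ∃ m n : ℤ, v = m • u₁ + n • u₂ := by
  obtain ⟨⟨p, q⟩, b⟩ := v
  obtain rfl : b = -star ⟨p, q⟩ := kappa1_eq_self_iff.mp hv
  refine ⟨-p, q - p, ?_⟩
  ext <;> simp [u₁, u₂, gi]

lemma hz_zsmul_add_zsmul_self (m n : ℤ) :
    hz (m • u₁ + n • u₂) (m • u₁ + n • u₂) = ((-2 * (2 * m ^ 2 + n ^ 2) : ℤ) : GaussianInt) := by
  ext <;> simp [hz, u₁, u₂, gi, sq] <;> ring

lemma exists_zsmul_add_zsmul_of_hz_self_eq {v : Lz} (hv : kappa1 v = v) {k : ℤ}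
    (h : hz v v = ((-2 * k : ℤ) : GaussianInt)) :
    ∃ m n : ℤ, v = m • u₁ + n • u₂ ∧ 2 * m ^ 2 + n ^ 2 = k := by
  obtain ⟨m, n, rfl⟩ := exists_eq_zsmul_add_zsmul_of_kappa1_eq_self hv
  rw [hz_zsmul_add_zsmul_self, Int.cast_inj] at h
  exact ⟨m, n, rfl, by linarith⟩

lemma eq_or_eq_neg_u₁_of_kappa1_eq_self {v : Lz} (hv : kappa1 v = v) (h : hz v v = hz u₁ u₁) :
    v = u₁ ∨ v = -u₁ := by
  obtain ⟨m, n, rfl, hmn⟩ := exists_zsmul_add_zsmul_of_hz_self_eq hv (k := 2) h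
  obtain ⟨rfl | rfl, rfl⟩ := eq_of_two_mul_sq_add_sq_eq_two hmn <;> simp

lemma eq_or_eq_neg_u₂_of_kappa1_eq_self {v : Lz} (hv : kappa1 v = v) (h : hz v v = hz u₂ u₂) :
    v = u₂ ∨ v = -u₂ := by
  obtain ⟨m, n, rfl, hmn⟩ := exists_zsmul_add_zsmul_of_hz_self_eq hv (k := 1) h
  obtain ⟨rfl, rfl | rfl⟩ := eq_of_two_mul_sq_add_sq_eq_one hmn <;> simp

/-- The reflection `x ↦ x - (2 h(u₁, x) / h(u₁, u₁)) • u₁`, using `h(u₁, x) = 2 (x₁ - x₂)` and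
`h(u₁, u₁) = -4`. -/
def reflU₁ (x : Lz) : Lz := x + (x.1 - x.2) • u₁

lemma reflU₁_reflU₁ (x : Lz) : reflU₁ (reflU₁ x) = x := by
  ext <;> simp [reflU₁, u₁, gi] <;> ring

lemma isIsomLz_reflU₁ : IsIsomLz reflU₁ := by
  refine ⟨Function.Involutive.bijective reflU₁_reflU₁, fun x y => ?_, fun c x => ?_, fun x y => ?_⟩
  · ext <;> simp [reflU₁, u₁, gi] <;> ring
  · ext <;> simp [reflU₁, u₁, gi] <;> ring
  · ext <;> simp [hz, reflU₁, u₁, gi] <;> ring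

lemma commute_kappa1_reflU₁ : Function.Commute kappa1 reflU₁ := by
  intro x
  ext <;> simp [kappa1, reflU₁, u₁, gi] <;> ring

lemma commute_kappa1_neg {A : Lz → Lz} (h : Function.Commute kappa1 A) :
    Function.Commute kappa1 (-A) := fun x => by
  simp only [Pi.neg_apply, kappa1_neg, h x]

end Lz

lemma isIsomLz_id : IsIsomLz id :=
  ⟨Function.bijective_id, fun _ _ => rfl, fun _ _ => rfl, fun _ _ => rfl⟩

namespace IsIsomLz

lemma hz_map_map {A : Lz → Lz} (hA : IsIsomLz A) (x y : Lz) : hz (A x) (A y) = hz x y :=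
  hA.2.2.2 x y

lemma neg {A : Lz → Lz} (hA : IsIsomLz A) : IsIsomLz (-A) := by
  obtain ⟨hbij, hadd, hsmul, hform⟩ := hA
  refine ⟨(Equiv.neg Lz).bijective.comp hbij, fun x y => ?_, fun c x => ?_, fun x y => ?_⟩
  · simp [hadd, add_comm]
  · simp [hsmul]
  · simp [Lz.hz_neg_neg, hform]

lemma image_fix_kappa1 {A : Lz → Lz} (hA : IsIsomLz A) (h : Function.Commute kappa1 A) :
    A '' {v : Lz | kappa1 v = v} = {v : Lz | kappa1 v = v} :=
  h.image_fixedPoints_of_bijective hA.1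

end IsIsomLz

open Lz in
/-- Every isometry `A ∈ Isom(L_z)` stabilizing `Fix(κ₁)` setwise
satisfies `A u₁ = ε₁ • u₁` and `A u₂ = ε₂ • u₂` with signs `ε₁, ε₂ ∈ {1, −1}`;
conversely every choice of signs is realized by such an isometry.  Hence the setwise
stabilizer of `Fix(κ₁)` in `Isom(L_z)` acts on `Fix(κ₁)` through `ℤ/2 × ℤ/2`. -/
theorem stmt11 :
    letI u₁ : Lz := (-1 - gi, 1 - gi)
    letI u₂ : Lz := (gi, gi)
    (∀ A : Lz → Lz, IsIsomLz A → A '' {v : Lz | kappa1 v = v} = {v : Lz | kappa1 v = v} →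
      ∃ ε₁ ∈ ({1, -1} : Set GaussianInt), ∃ ε₂ ∈ ({1, -1} : Set GaussianInt),
        A u₁ = ε₁ • u₁ ∧ A u₂ = ε₂ • u₂) ∧
    (∀ ε₁ ∈ ({1, -1} : Set GaussianInt), ∀ ε₂ ∈ ({1, -1} : Set GaussianInt),
      ∃ A : Lz → Lz, IsIsomLz A ∧
        A '' {v : Lz | kappa1 v = v} = {v : Lz | kappa1 v = v} ∧
        A u₁ = ε₁ • u₁ ∧ A u₂ = ε₂ • u₂) := by
  refine ⟨fun A hA hfix => ?_, fun ε₁ hε₁ ε₂ hε₂ => ?_⟩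
  · have hmem : ∀ v : Lz, kappa1 v = v → kappa1 (A v) = A v := fun v hv =>
      hfix.subset (Set.mem_image_of_mem A hv)
    obtain ⟨ε₁, hε₁, h₁⟩ := exists_sign_smul_of_eq_or_eq_neg (R := GaussianInt) <|
      eq_or_eq_neg_u₁_of_kappa1_eq_self (hmem u₁ (by decide)) (hA.hz_map_map _ _)
    obtain ⟨ε₂, hε₂, h₂⟩ := exists_sign_smul_of_eq_or_eq_neg (R := GaussianInt) <|
      eq_or_eq_neg_u₂_of_kappa1_eq_self (hmem u₂ (by decide)) (hA.hz_map_map _ _)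
    exact ⟨ε₁, hε₁, ε₂, hε₂, h₁, h₂⟩
  · simp only [Set.mem_insert_iff, Set.mem_singleton_iff] at hε₁ hε₂
    rcases hε₁ with rfl | rfl <;> rcases hε₂ with rfl | rfl
    · exact ⟨id, isIsomLz_id, isIsomLz_id.image_fix_kappa1 .id_right, by decide, by decide⟩
    · exact ⟨-reflU₁, isIsomLz_reflU₁.neg, isIsomLz_reflU₁.neg.image_fix_kappa1
        (commute_kappa1_neg commute_kappa1_reflU₁), by decide, by decide⟩
    · exact ⟨reflU₁, isIsomLz_reflU₁, isIsomLz_reflU₁.image_fix_kappa1 commute_kappa1_reflU₁,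
        by decide, by decide⟩
    · exact ⟨-id, isIsomLz_id.neg, isIsomLz_id.neg.image_fix_kappa1 (commute_kappa1_neg .id_right),
        by decide, by decide⟩
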